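/- arXiv:2108.07362 — 9 statements merged into one kernel-verified Lean document; each statement's English description precedes it below -/
import Mathlib

section
/- Let G be a finite simple graph with an injective labeling id : V → ℕ. Then there is exactly one state assignment state : V → {IN, OUT} satisfying, for every v ∈ V: state(v) = IN ↔ every neighbor w of v satisfies (id(v) < id(w)) ∨ (∃ u ∈ N(w), state(u) = IN ∧ id(u) < id(w)). -/
open Classical in
noncomputable def dpSt {V : Type*} (G : SimpleGraph V) (id_ : V → ℕ) (v : V) : Bool :=
  decide (∀ w, G.Adj v w → id_ w < id_ v →
    ∃ u, ∃ _ : id_ u < id_ w, G.Adj w u ∧ dpSt G id_ u = true)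
termination_by id_ v
decreasing_by all_goals omega

lemma dpSt_spec {V : Type*} (G : SimpleGraph V) (id_ : V → ℕ) (v : V) :
    dpSt G id_ v = true ↔ ∀ w, G.Adj v w → id_ w < id_ v →
      ∃ u, G.Adj w u ∧ dpSt G id_ u = true ∧ id_ u < id_ w := by
  rw [dpSt]
  simp only [decide_eq_true_eq]
  constructor
  · intro h w hw hlt
    obtain ⟨u, hu1, hu2, hu3⟩ := h w hw hlt
    exact ⟨u, hu2, hu3, hu1⟩
  · intro h w hw hlt
    obtain ⟨u, hu1, hu2, hu3⟩ := h w hw hlt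
    exact ⟨u, hu3, hu1, hu2⟩

-- any state satisfying the original fixed-point condition satisfies the reduced one, and conversely
lemma cond_iff {V : Type*} (G : SimpleGraph V) (id_ : V → ℕ)
    (hinj : Function.Injective id_) (s : V → Bool) (v : V) :
    (∀ w : V, G.Adj v w →
        (id_ v < id_ w ∨ ∃ u : V, G.Adj w u ∧ s u = true ∧ id_ u < id_ w)) ↔
    (∀ w : V, G.Adj v w → id_ w < id_ v →
        ∃ u : V, G.Adj w u ∧ s u = true ∧ id_ u < id_ w) := by
  constructor
  · intro h w hw hlt
    rcases h w hw with h' | h'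
    · omega
    · exact h'
  · intro h w hw
    rcases lt_trichotomy (id_ v) (id_ w) with h' | h' | h'
    · exact Or.inl h'
    · exact absurd (hinj h') (G.ne_of_adj hw)
    · exact Or.inr (h w hw h')

/-- dpMIS legitimate configuration exists and is unique. -/
theorem stmt1 {V : Type*} [Fintype V] (G : SimpleGraph V) (id_ : V → ℕ)
    (hinj : Function.Injective id_) :
    ∃! state : V → Bool, ∀ v : V,
      state v = true ↔ ∀ w : V, G.Adj v w →
        (id_ v < id_ w ∨ ∃ u : V, G.Adj w u ∧ state u = true ∧ id_ u < id_ w) := by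
  refine ⟨dpSt G id_, ?_, ?_⟩
  · intro v
    rw [cond_iff G id_ hinj]
    exact dpSt_spec G id_ v
  · intro s hs
    have hs' : ∀ v, s v = true ↔ ∀ w, G.Adj v w → id_ w < id_ v →
        ∃ u, G.Adj w u ∧ s u = true ∧ id_ u < id_ w := by
      intro v; rw [hs v, cond_iff G id_ hinj]
    have key : ∀ n, ∀ v, id_ v < n → s v = dpSt G id_ v := by
      intro n
      induction n with
      | zero => intro v hv; omega
      | succ n ih =>
        intro v hv
        rcases Nat.lt_or_ge (id_ v) n with h | h
        · exact ih v h
        · have hvn : id_ v = n := by omega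
          have : (s v = true) ↔ (dpSt G id_ v = true) := by
            rw [hs' v, dpSt_spec G id_ v]
            constructor <;> intro h' w hw hlt <;>
              obtain ⟨u, hu1, hu2, hu3⟩ := h' w hw hlt
            · exact ⟨u, hu1, by rw [← ih u (by omega)]; exact hu2, hu3⟩
            · exact ⟨u, hu1, by rw [ih u (by omega)]; exact hu2, hu3⟩
          exact Bool.eq_iff_iff.mpr this
    exact funext fun v => key (id_ v + 1) v (by omega)
end

section
/- In any legitimate configuration of dpMIS (as defined by the fixed-point condition), the set of IN vertices forms a maximal independent set of G. -/
/-- In any legitimate configuration of dpMIS, the IN vertices form a maximal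
independent set. -/
theorem stmt2 {V : Type*} [Fintype V] (G : SimpleGraph V) (id_ : V → ℕ)
    (hinj : Function.Injective id_) (state : V → Bool)
    (hleg : ∀ v : V,
      state v = true ↔ ∀ w : V, G.Adj v w →
        (id_ v < id_ w ∨ ∃ u : V, G.Adj w u ∧ state u = true ∧ id_ u < id_ w)) :
    (∀ v, state v = true → ∀ w, state w = true → ¬ G.Adj v w) ∧
      (∀ v, state v = false → ∃ w, G.Adj v w ∧ state w = true) := by
  -- Key lemma 1: no two adjacent IN vertices (with id_ v < id_ w), by strong induction on id_ v
  have key1 : ∀ n : ℕ, ∀ v w : V, id_ v = n → G.Adj v w → state v = true →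
      state w = true → id_ v < id_ w → False := by
    intro n
    induction n using Nat.strong_induction_on with
    | _ n ih =>
      intro v w hvn hadj hsv hsw hlt
      rcases (hleg w).mp hsw v hadj.symm with h | ⟨u, huv, hsu, hu⟩
      · exact absurd hlt (not_lt.mpr h.le)
      · exact ih (id_ u) (hvn ▸ hu) u v rfl huv.symm hsu hsv hu
  -- Key lemma 2: every OUT vertex has an IN neighbor of smaller id, by strong induction
  have key2 : ∀ n : ℕ, ∀ v : V, id_ v = n → state v = false →
      ∃ u, G.Adj v u ∧ state u = true ∧ id_ u < id_ v := by
    intro n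
    induction n using Nat.strong_induction_on with
    | _ n ih =>
      intro v hvn hsv
      have hne : ¬ ∀ w : V, G.Adj v w →
          (id_ v < id_ w ∨ ∃ u : V, G.Adj w u ∧ state u = true ∧ id_ u < id_ w) := by
        intro h
        rw [(hleg v).mpr h] at hsv
        exact Bool.noConfusion hsv
      push_neg at hne
      obtain ⟨w, hadj, hnlt, hnex⟩ := hne
      have hwlt : id_ w < id_ v := by
        rcases lt_or_eq_of_le hnlt with h | h
        · exact h
        · exact absurd (hinj h) hadj.ne'
      cases hsw : state w with
      | true => exact ⟨w, hadj, hsw, hwlt⟩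
      | false =>
        obtain ⟨u, huw, hsu, hu⟩ := ih (id_ w) (hvn ▸ hwlt) w rfl hsw
        exact absurd hu (not_lt.mpr (hnex u huw hsu))
  refine ⟨?_, ?_⟩
  · intro v hsv w hsw hadj
    rcases lt_trichotomy (id_ v) (id_ w) with h | h | h
    · exact key1 (id_ v) v w rfl hadj hsv hsw h
    · exact hadj.ne (hinj h)
    · exact key1 (id_ w) w v rfl hadj.symm hsw hsv h
  · intro v hsv
    obtain ⟨u, hadj, hsu, _⟩ := key2 (id_ v) v rfl hsv
    exact ⟨u, hadj, hsu⟩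
end

section
/- (vpMIS mutual exclusion) In any configuration of algorithm vpMIS, if the guard of rule R₁ holds at a vertex v (i.e., v is pending and every neighbor w satisfies ¬pending(w) ∨ cmp(v,w)), then no neighbor of v has the guard of R₁ or of R₂ enabled. -/
variable {V : Type*} [Fintype V] [DecidableEq V]

/-- `cmp v w` of vpMIS: larger degree, ties broken by smaller id. -/
def cmpv (G : SimpleGraph V) [DecidableRel G.Adj] (id_ : V → ℕ) (v w : V) : Prop :=
  G.degree v > G.degree w ∨ (G.degree v = G.degree w ∧ id_ v < id_ w)

/-- `pending v`: v and all its neighbors are OUT (`false`). -/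
def pending (G : SimpleGraph V) (state : V → Bool) (v : V) : Prop :=
  state v = false ∧ ∀ w, G.Adj v w → state w = false

/-- `conflict*(v)` of vpMIS. -/
def conflictStar (G : SimpleGraph V) [DecidableRel G.Adj] (id_ : V → ℕ)
    (state : V → Bool) (v : V) : Prop :=
  state v = true ∧ ∃ w, G.Adj v w ∧ state w = true ∧ ¬ cmpv G id_ v w

/-- Guard of rule R₁ of vpMIS. -/
def guardR1 (G : SimpleGraph V) [DecidableRel G.Adj] (id_ : V → ℕ)
    (state : V → Bool) (v : V) : Prop :=
  pending G state v ∧ ∀ w, G.Adj v w → (¬ pending G state w ∨ cmpv G id_ v w)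

/-- vpMIS mutual exclusion: if R₁ is enabled at `v` then no neighbor of `v`
has R₁ or R₂ enabled. -/
theorem stmt3 (G : SimpleGraph V) [DecidableRel G.Adj] (id_ : V → ℕ)
    (hinj : Function.Injective id_) (state : V → Bool) (v : V)
    (hguard : guardR1 G id_ state v) :
    ∀ w, G.Adj v w → ¬ guardR1 G id_ state w ∧ ¬ conflictStar G id_ state w := by
  intro w hvw
  obtain ⟨⟨hvout, hnb⟩, hcmp⟩ := hguard
  have hwout : state w = false := hnb w hvw
  constructor
  · rintro ⟨hpw, hcmpw⟩
    have h1 := hcmp w hvw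
    have h2 := hcmpw v hvw.symm
    have hpv : pending G state v := ⟨hvout, hnb⟩
    have c1 : cmpv G id_ v w := h1.resolve_left (fun h => h hpw)
    have c2 : cmpv G id_ w v := h2.resolve_left (fun h => h hpv)
    rcases c1 with h | ⟨hd, hi⟩ <;> rcases c2 with h' | ⟨hd', hi'⟩ <;> omega
  · rintro ⟨hin, -⟩
    simp [hwout] at hin
end

section
/- (vpMIS fixed points are MIS) If in a configuration of vpMIS no vertex has rule R₁ or R₂ enabled, then the set of IN vertices is a maximal independent set of G. -/
variable {V : Type*} [Fintype V] [DecidableEq V]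

/-! Of two adjacent IN vertices, the one that does not precede the other in `cmpv` has `conflict*`:
`cmpv` is the lexicographic order on (−degree, id), hence asymmetric. An OUT vertex without IN
neighbour is pending, and as `cmpv` is a strict total order once ids are injective, the pending
vertex preceding all other pending vertices has `R₁` enabled. -/

section Priority

variable {V : Type*} [Fintype V] (G : SimpleGraph V) [DecidableRel G.Adj] (id_ : V → ℕ)

def cmpKey (v : V) : ℕᵒᵈ ×ₗ ℕ :=
  toLex (OrderDual.toDual (G.degree v), id_ v)

theorem cmpv_iff_cmpKey_lt (v w : V) : cmpv G id_ v w ↔ cmpKey G id_ v < cmpKey G id_ w := by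
  simp only [cmpv, cmpKey, Prod.Lex.toLex_lt_toLex, OrderDual.toDual_lt_toDual, gt_iff_lt,
    EmbeddingLike.apply_eq_iff_eq]

theorem cmpv_asymm {v w : V} (h : cmpv G id_ v w) : ¬ cmpv G id_ w v := by
  rw [cmpv_iff_cmpKey_lt] at h ⊢
  exact h.not_gt

theorem cmpKey_injective (hinj : Function.Injective id_) : Function.Injective (cmpKey G id_) :=
  fun _ _ h => hinj (congrArg (fun p => (ofLex p).2) h)

end Priority

section FixedPoint

variable {V : Type*} [Fintype V] {G : SimpleGraph V} [DecidableRel G.Adj] {id_ : V → ℕ}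
  {state : V → Bool}

theorem not_adj_of_forall_not_conflictStar (hR2 : ∀ v, ¬ conflictStar G id_ state v) {v w : V}
    (hv : state v = true) (hw : state w = true) : ¬ G.Adj v w := by
  intro hadj
  by_cases hvw : cmpv G id_ v w
  · exact hR2 w ⟨hw, v, hadj.symm, hv, cmpv_asymm G id_ hvw⟩
  · exact hR2 v ⟨hv, w, hadj, hw, hvw⟩

theorem exists_guardR1_of_pending (hinj : Function.Injective id_) {v : V}
    (hv : pending G state v) : ∃ m, guardR1 G id_ state m := by
  obtain ⟨m, hm, hmin⟩ :=
    Set.exists_min_image {u | pending G state u} (cmpKey G id_) (Set.toFinite _) ⟨v, hv⟩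
  refine ⟨m, hm, fun w hadj => or_iff_not_imp_left.mpr fun hw => ?_⟩
  rw [cmpv_iff_cmpKey_lt]
  exact (hmin w (not_not.mp hw)).lt_of_ne
    fun h => G.ne_of_adj hadj (cmpKey_injective G id_ hinj h)

end FixedPoint

/-- vpMIS fixed points are MIS: if no vertex has R₁ or R₂ enabled, the IN
vertices form a maximal independent set. -/
theorem stmt4 (G : SimpleGraph V) [DecidableRel G.Adj] (id_ : V → ℕ)
    (hinj : Function.Injective id_) (state : V → Bool)
    (hR1 : ∀ v, ¬ guardR1 G id_ state v)
    (hR2 : ∀ v, ¬ conflictStar G id_ state v) :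
    (∀ v, state v = true → ∀ w, state w = true → ¬ G.Adj v w) ∧
      (∀ v, state v = false → ∃ w, G.Adj v w ∧ state w = true) := by
  refine ⟨fun v hv w hw => not_adj_of_forall_not_conflictStar hR2 hv hw, fun v hv => ?_⟩
  by_contra! hnbr
  have hpending : pending G state v := ⟨hv, fun w hw => Bool.eq_false_iff.mpr (hnbr w hw)⟩
  obtain ⟨m, hm⟩ := exists_guardR1_of_pending hinj hpending
  exact hR1 m hm
end

section
/- (pfMIS no deadlock) In pfMIS, if pending(v) and hesitate(v) both hold at a vertex v, then there exists a neighbor of v at which rule R₁ is enabled, i.e., a neighbor w with pending(w) ∧ ¬hesitate(w). -/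
variable {V : Type*} [Fintype V] [DecidableEq V]

/-- The `hesitate` predicate of pfMIS. -/
def hesitate (G : SimpleGraph V) (id_ : V → ℕ) (state : V → Bool)
    (parent : V → Option V) (v : V) : Prop :=
  parent v ≠ none ∧ ∃ w, G.Adj v w ∧ parent v = some w ∧
    (∀ z, G.Adj v z → z ≠ w → parent z ≠ some v) ∧
    (∀ u, G.Adj w u → u ≠ v → state u = false ∧ (parent u = some w ∨ parent u = none)) ∧
    (parent w = none ∨ parent w ≠ some v ∨ id_ w < id_ v ∨
      ∃ y, G.Adj w y ∧ y ≠ v ∧ parent y = some w)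

/-- pfMIS no deadlock: if `pending v` and `hesitate v` hold, then some
neighbor of `v` has rule R₁ enabled. -/
theorem stmt5 (G : SimpleGraph V) (id_ : V → ℕ) (hinj : Function.Injective id_)
    (state : V → Bool) (parent : V → Option V) (v : V)
    (hp : pending G state v) (hh : hesitate G id_ state parent v) :
    ∃ w, G.Adj v w ∧ pending G state w ∧ ¬ hesitate G id_ state parent w := by
  obtain ⟨hpn, w, hvw, hpv, hA, hB, hC⟩ := hh
  refine ⟨w, hvw, ?_, ?_⟩
  · -- pending w
    refine ⟨hp.2 w hvw, ?_⟩
    intro u hwu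
    by_cases hu : u = v
    · subst hu; exact hp.1
    · exact (hB u hwu hu).1
  · -- ¬ hesitate w
    rintro ⟨hwn, w', hww', hpw, hA', hB', hC'⟩
    by_cases hw'v : w' = v
    · rw [hw'v] at hpw hA' hC'
      -- parent w = some v
      -- From hC: first two disjuncts fail; existential fails by hA'
      have hidwv : id_ w < id_ v := by
        rcases hC with h | h | h | ⟨y, hwy, hyv, hpy⟩
        · exact absurd h (by simp [hpw])
        · exact absurd hpw h
        · exact h
        · exact absurd hpy (hA' y hwy hyv)
      -- From hC': first two disjuncts fail; existential fails by hA
      have hidvw : id_ v < id_ w := by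
        rcases hC' with h | h | h | ⟨y, hvy, hyw, hpy⟩
        · exact absurd h (by simp [hpv])
        · exact absurd hpv h
        · exact h
        · exact absurd hpy (hA y hvy hyw)
      exact absurd hidvw (not_lt_of_gt hidwv)
    · -- w' ≠ v : hA' at v contradicts parent v = some w
      have hwv : G.Adj w v := hvw.symm
      exact (hA' v hwv (fun h => hw'v (by simp [h]) )) hpv
end

section
/- (pfMIS fixed points are MIS) In pfMIS, if no vertex has any rule enabled (in particular, no vertex v with conflict(v), and no vertex v with pending(v) ∧ ¬hesitate(v)), then the set of IN vertices is a maximal independent set of G. -/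
variable {V : Type*} [Fintype V] [DecidableEq V]

def conflict (G : SimpleGraph V) (state : V → Bool) (v : V) : Prop :=
  state v = true ∧ ∃ w, G.Adj v w ∧ state w = true

/-- pfMIS fixed points are MIS: if no vertex has a conflict and no vertex has
R₁ enabled, the IN vertices form a maximal independent set. -/
theorem stmt6 (G : SimpleGraph V) (id_ : V → ℕ) (hinj : Function.Injective id_)
    (state : V → Bool) (parent : V → Option V)
    (hc : ∀ v, ¬ conflict G state v)
    (hr1 : ∀ v, ¬ (pending G state v ∧ ¬ hesitate G id_ state parent v)) :
    (∀ v, state v = true → ∀ w, state w = true → ¬ G.Adj v w) ∧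
      (∀ v, state v = false → ∃ w, G.Adj v w ∧ state w = true) := by
  have key : ∀ v, ¬ pending G state v := by
    intro v hp
    have hh : hesitate G id_ state parent v := by
      by_contra h; exact hr1 v ⟨hp, h⟩
    obtain ⟨hpne, w, hvw, hpv, hno, hunb, hlast⟩ := hh
    -- w is pending
    have hpw : pending G state w := by
      refine ⟨hp.2 w hvw, fun u huw => ?_⟩
      by_cases hu : u = v
      · subst hu; exact hp.1
      · exact (hunb u huw hu).1
    -- w is hesitating (by hr1), derive contradiction
    have hhw : hesitate G id_ state parent w := by
      by_contra h; exact hr1 w ⟨hpw, h⟩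
    obtain ⟨hwne, w', hww', hpw', hno', hunb', hlast'⟩ := hhw
    by_cases hcase : w' = v
    · rw [hcase] at hpw' hno' hlast'
      -- parent w = some v, mutual pointing: use id comparison
      have h1 : id_ w < id_ v := by
        rcases hlast with h | h | h | ⟨y, hy1, hy2, hy3⟩
        · exact absurd hpw' (by simp [h])
        · exact absurd hpw' h
        · exact h
        · exact absurd hy3 (hno' y hy1 hy2)
      have h2 : id_ v < id_ w := by
        rcases hlast' with h | h | h | ⟨y, hy1, hy2, hy3⟩
        · exact absurd hpv (by simp [h])
        · exact absurd hpv h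
        · exact h
        · exact absurd hy3 (hno y hy1 hy2)
      exact absurd h1 (by omega)
    · -- w' ≠ v : then v is a neighbor of w with v ≠ w' and parent v = some w
      exact hno' v hvw.symm (fun h => hcase h.symm) hpv
  constructor
  · intro v hv w hw hadj
    exact hc v ⟨hv, w, hadj, hw⟩
  · intro v hv
    by_contra h
    push_neg at h
    exact key v ⟨hv, fun w hw => by
      cases hsw : state w with
      | false => rfl
      | true => exact absurd hsw (h w hw)⟩
end

section
/- (Greedy removes half the edges in expectation) Let G = (V,E) be a finite simple graph with no isolated vertices and assign a uniformly random injective labeling (permutation) id of V. A vertex v 'dominates' an edge vu if id(v) is strictly smaller than the ids of all vertices in (N(v) ∪ N(u)) \ {v}. Let Y be half the number of ordered pairs (v,u) with vu ∈ E such that the edge vu is 'removed', where edge wu is removed whenever some neighbor v of u dominates an edge vu. Then 2·E[Y] ≥ |E|. A key intermediate step: for each edge vu, the probability that id(v) is minimal among N(v) ∪ N(u) is at least 1/(d(v)+d(u)). -/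
/-!
A vertex `v` dominates the edge `vu` exactly when it carries the smallest label of
`N(v) ∪ N(u)`; by symmetry every vertex of that set is the minimum equally often, so this
happens for at least a `1/(d(v)+d(u))` fraction of the labelings. Two neighbours of `u` cannot
both dominate (each would have the smaller label), and once one does, all `d(u)` edges at `u`
are removed. Hence
`2·E[Y] ≥ ∑_u d(u) ∑_{v ∼ u} P(v dominates vu) ≥ ∑_u ∑_{v ∼ u} d(u)/(d(v)+d(u))`,
and pairing the term of `(u, v)` with that of `(v, u)` shows the last sum is `|E|`.
-/

open scoped Classical

variable {V : Type*} [Fintype V] [DecidableEq V]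

/-- Edge `wu` (with `u` its second endpoint) is removed under labeling `π`:
some neighbor `v` of `u` dominates the edge `vu`, i.e. `π v` is smaller than
the label of every vertex of `(N(v) ∪ N(u)) \ {v}`. -/
def removedEdge (G : SimpleGraph V) [DecidableRel G.Adj]
    (π : V ≃ Fin (Fintype.card V)) (u : V) : Prop :=
  ∃ v, G.Adj v u ∧
    ∀ x ∈ (G.neighborFinset v ∪ G.neighborFinset u) \ {v}, π v < π x

/-- `Y π` is half the number of ordered adjacent pairs `(w,u)` whose edge is removed. -/
noncomputable def Yfun (G : SimpleGraph V) [DecidableRel G.Adj]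
    (π : V ≃ Fin (Fintype.card V)) : ℝ :=
  (1 / 2) * ∑ w : V, ∑ u : V,
    if G.Adj w u ∧ removedEdge G π u then (1 : ℝ) else 0

open Finset

section LabelMin

variable {α β : Type*} [DecidableEq α] [LinearOrder β]

def IsLabelMin (π : α ≃ β) (T : Finset α) (v : α) : Prop :=
  ∀ x ∈ T \ {v}, π v < π x

variable {π : α ≃ β} {T : Finset α} {v w : α}

lemma IsLabelMin.eq (hv : IsLabelMin π T v) (hw : IsLabelMin π T w) (hvT : v ∈ T)
    (hwT : w ∈ T) : v = w := by
  by_contra hne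
  exact lt_asymm (hv w (by simp [hwT, Ne.symm hne])) (hw v (by simp [hvT, hne]))

lemma exists_isLabelMin (π : α ≃ β) (hT : T.Nonempty) : ∃ v ∈ T, IsLabelMin π T v := by
  obtain ⟨v, hvT, hmin⟩ := T.exists_min_image π hT
  refine ⟨v, hvT, fun x hx => (hmin x (mem_sdiff.1 hx).1).lt_of_ne ?_⟩
  exact π.injective.ne fun h => by simp [h] at hx

lemma IsLabelMin.swap_trans (hw : IsLabelMin π T w) (hvT : v ∈ T) :
    IsLabelMin ((Equiv.swap v w).trans π) T v := by
  intro x hx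
  obtain ⟨hxT, hxv⟩ : x ∈ T ∧ x ≠ v := by simpa using hx
  simp only [Equiv.trans_apply, Equiv.swap_apply_left]
  rcases eq_or_ne x w with rfl | hxw
  · rw [Equiv.swap_apply_right]
    exact hw v (by simp [hvT, hxv.symm])
  · rw [Equiv.swap_apply_of_ne_of_ne hxv hxw]
    exact hw x (by simp [hxT, hxw])

variable [Fintype α] [Fintype β] [DecidableEq β]

lemma card_filter_isLabelMin_eq (hvT : v ∈ T) (hwT : w ∈ T) :
    #{π : α ≃ β | IsLabelMin π T v} = #{π : α ≃ β | IsLabelMin π T w} := by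
  refine card_nbij' (fun π => (Equiv.swap w v).trans π) (fun π => (Equiv.swap v w).trans π)
    (fun π hπ => ?_) (fun π hπ => ?_) (fun π _ => ?_) (fun π _ => ?_)
  · simpa using (mem_filter.1 hπ).2.swap_trans hwT
  · simpa using (mem_filter.1 hπ).2.swap_trans hvT
  · ext; simp [Equiv.swap_comm v w]
  · ext; simp [Equiv.swap_comm v w]

lemma card_filter_isLabelMin_mul_card (hvT : v ∈ T) :
    #{π : α ≃ β | IsLabelMin π T v} * #T = Fintype.card (α ≃ β) := by
  have hunique (π : α ≃ β) : #{w ∈ T | IsLabelMin π T w} = 1 := by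
    obtain ⟨w, hwT, hw⟩ := exists_isLabelMin π ⟨v, hvT⟩
    refine card_eq_one.2 ⟨w, eq_singleton_iff_unique_mem.2 ⟨by simp [hwT, hw], ?_⟩⟩
    intro x hx
    obtain ⟨hxT, hx⟩ := mem_filter.1 hx
    exact hx.eq hw hxT hwT
  calc #{π : α ≃ β | IsLabelMin π T v} * #T
      = ∑ w ∈ T, #{π : α ≃ β | IsLabelMin π T w} := by
        rw [sum_congr rfl fun w hwT => card_filter_isLabelMin_eq hwT hvT, sum_const, smul_eq_mul,
          mul_comm]
    _ = ∑ π : α ≃ β, #{w ∈ T | IsLabelMin π T w} :=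
        sum_card_bipartiteAbove_eq_sum_card_bipartiteBelow _
    _ = Fintype.card (α ≃ β) := by simp [hunique]

end LabelMin

namespace SimpleGraph

section Symmetrization

variable {W : Type*} [Fintype W] (G : SimpleGraph W) [DecidableRel G.Adj]

lemma sum_sum_neighborFinset_comm {M : Type*} [AddCommMonoid M] (f : W → W → M) :
    ∑ u, ∑ v ∈ G.neighborFinset u, f u v = ∑ u, ∑ v ∈ G.neighborFinset u, f v u := by
  simp_rw [neighborFinset_eq_filter, sum_filter]
  rw [sum_comm]
  simp_rw [G.adj_comm]

lemma sum_sum_neighborFinset_eq_card_edgeFinset {f : W → W → ℝ}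
    (hf : ∀ u v, G.Adj u v → f u v + f v u = 1) :
    ∑ u, ∑ v ∈ G.neighborFinset u, f u v = #G.edgeFinset := by
  have : 2 * ∑ u, ∑ v ∈ G.neighborFinset u, f u v = 2 * #G.edgeFinset := by
    rw [two_mul]
    nth_rw 2 [sum_sum_neighborFinset_comm]
    simp_rw [← sum_add_distrib]
    rw [sum_congr rfl fun u _ => sum_congr rfl fun v hv => hf u v ((G.mem_neighborFinset u v).1 hv)]
    exact_mod_cast by simpa using G.sum_degrees_eq_twice_card_edges
  linarith

lemma sum_sum_neighborFinset_degree_div_eq_card_edgeFinset :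
    ∑ u, ∑ v ∈ G.neighborFinset u, (G.degree u : ℝ) / (G.degree v + G.degree u) =
      #G.edgeFinset := by
  refine G.sum_sum_neighborFinset_eq_card_edgeFinset fun u v huv => ?_
  have : 0 < G.degree u := G.degree_pos_iff_exists_adj u |>.2 ⟨v, huv⟩
  rw [add_comm (G.degree v : ℝ), ← add_div, div_self (by positivity)]

end Symmetrization

section Domination

variable {W β : Type*} [Fintype W] [DecidableEq W] [LinearOrder β]
  (G : SimpleGraph W) [DecidableRel G.Adj]

def Dominates (π : W ≃ β) (v u : W) : Prop :=
  IsLabelMin π (G.neighborFinset v ∪ G.neighborFinset u) v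

noncomputable def dominators (π : W ≃ β) (u : W) : Finset W :=
  {v ∈ G.neighborFinset u | G.Dominates π v u}

variable {G}

lemma Dominates.eq {π : W ≃ β} {u v w : W} (hv : G.Dominates π v u) (hw : G.Dominates π w u)
    (hvu : G.Adj v u) (hwu : G.Adj w u) : v = w := by
  by_contra hne
  exact lt_asymm (hv w (by simp [hwu.symm, Ne.symm hne])) (hw v (by simp [hvu.symm, hne]))

lemma card_dominators_le_one (π : W ≃ β) (u : W) : #(G.dominators π u) ≤ 1 :=
  card_le_one.2 fun v hv w hw => by
    simp only [dominators, mem_filter, mem_neighborFinset] at hv hw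
    exact hv.2.eq hw.2 hv.1.symm hw.1.symm

variable [Fintype β] [DecidableEq β]

lemma card_le_card_filter_dominates_mul {v u : W} (huv : G.Adj v u) :
    Fintype.card (W ≃ β) ≤
      #{π : W ≃ β | G.Dominates π v u} * (G.degree v + G.degree u) := by
  rw [← card_filter_isLabelMin_mul_card (T := G.neighborFinset v ∪ G.neighborFinset u) (v := v)
    (by simp [huv.symm])]
  refine Nat.mul_le_mul_left _ ?_
  simpa using card_union_le (G.neighborFinset v) (G.neighborFinset u)

variable (G) in
lemma card_mul_card_edgeFinset_le_sum_degree_mul_card_dominators :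
    (Fintype.card (W ≃ β) : ℝ) * #G.edgeFinset ≤
      ∑ π : W ≃ β, ∑ u, (G.degree u : ℝ) * #(G.dominators π u) := calc
  (Fintype.card (W ≃ β) : ℝ) * #G.edgeFinset
      = ∑ u, ∑ v ∈ G.neighborFinset u,
          (G.degree u : ℝ) * (Fintype.card (W ≃ β) / (G.degree v + G.degree u)) := by
        simp_rw [← G.sum_sum_neighborFinset_degree_div_eq_card_edgeFinset, mul_sum]
        exact sum_congr rfl fun u _ => sum_congr rfl fun v _ => by ring
  _ ≤ ∑ u, ∑ v ∈ G.neighborFinset u,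
          (G.degree u : ℝ) * #{π : W ≃ β | G.Dominates π v u} := by
        gcongr with u _ v hv
        refine div_le_of_le_mul₀ (by positivity) (by positivity) ?_
        exact_mod_cast card_le_card_filter_dominates_mul ((G.mem_neighborFinset u v).1 hv).symm
  _ = ∑ u, ∑ π : W ≃ β, (G.degree u : ℝ) * #(G.dominators π u) := by
        refine sum_congr rfl fun u _ => ?_
        rw [← mul_sum, ← mul_sum]
        exact_mod_cast congrArg _ (sum_card_bipartiteAbove_eq_sum_card_bipartiteBelow _)
  _ = ∑ π : W ≃ β, ∑ u, (G.degree u : ℝ) * #(G.dominators π u) := sum_comm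

end Domination

lemma card_dominators_le (G : SimpleGraph V) [DecidableRel G.Adj]
    (π : V ≃ Fin (Fintype.card V)) (u : V) :
    #(G.dominators π u) ≤ if removedEdge G π u then 1 else 0 := by
  split_ifs with hu
  · exact card_dominators_le_one π u
  · refine (card_eq_zero.2 <| filter_eq_empty_iff.2 fun v hv hvu => hu ?_).le
    exact ⟨v, ((G.mem_neighborFinset u v).1 hv).symm, hvu⟩

end SimpleGraph

lemma two_mul_Yfun (G : SimpleGraph V) [DecidableRel G.Adj] (π : V ≃ Fin (Fintype.card V)) :
    2 * Yfun G π = ∑ u, (G.degree u : ℝ) * if removedEdge G π u then 1 else 0 := by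
  rw [Yfun, ← mul_assoc, mul_one_div_cancel two_ne_zero, one_mul, sum_comm]
  refine sum_congr rfl fun u _ => ?_
  split_ifs with hu <;> simp [hu, ← G.card_neighborFinset_eq_degree, G.neighborFinset_eq_filter,
    G.adj_comm]

theorem stmt7_general (G : SimpleGraph V) [DecidableRel G.Adj] :
    (G.edgeFinset.card : ℝ) ≤
      2 * ((Fintype.card (V ≃ Fin (Fintype.card V)) : ℝ)⁻¹ *
        ∑ π : V ≃ Fin (Fintype.card V), Yfun G π) := by
  have hcard : (0 : ℝ) < Fintype.card (V ≃ Fin (Fintype.card V)) :=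
    Nat.cast_pos.2 <| Fintype.card_pos_iff.2 ⟨Fintype.equivFin V⟩
  have hY (π : V ≃ Fin (Fintype.card V)) :
      ∑ u, (G.degree u : ℝ) * #(G.dominators π u) ≤ 2 * Yfun G π := by
    rw [two_mul_Yfun]
    gcongr with u
    exact_mod_cast G.card_dominators_le π u
  rw [inv_mul_eq_div, mul_div_assoc', le_div_iff₀ hcard, mul_sum, mul_comm]
  exact G.card_mul_card_edgeFinset_le_sum_degree_mul_card_dominators.trans
    (sum_le_sum fun π _ => hY π)

/-- Greedy removes at least half of the edges in expectation over a uniformly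
random labeling: `2·E[Y] ≥ |E|`. -/
theorem stmt7 (G : SimpleGraph V) [DecidableRel G.Adj]
    (hiso : ∀ v : V, 0 < G.degree v) :
    (G.edgeFinset.card : ℝ) ≤
      2 * ((Fintype.card (V ≃ Fin (Fintype.card V)) : ℝ)⁻¹ *
        ∑ π : V ≃ Fin (Fintype.card V), Yfun G π) :=
  stmt7_general G
end

section
/- (Probability an edge's endpoint has the minimum id) Let G be a finite simple graph, vu ∈ E an edge, and let id be a uniformly random permutation labeling of V. Then the probability that id(v) < id(w) for all w ∈ (N(v) ∪ N(u)) \ {v} is at least 1/(d(v) + d(u)). -/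
open scoped Classical

section Aux

variable {V : Type*} [Fintype V] [DecidableEq V]

private def ev (T : Finset V) (x : V) : Finset (V ≃ Fin (Fintype.card V)) :=
  Finset.univ.filter (fun π => ∀ y ∈ T \ {x}, π x < π y)

private lemma ev_card_eq (T : Finset V) (v x : V) (hv : v ∈ T) (hx : x ∈ T) :
    (ev T x).card = (ev T v).card := by
  apply Finset.card_bij' (fun π _ => (Equiv.swap v x).trans π)
    (fun π _ => (Equiv.swap v x).trans π)
  · intro π hπ
    simp only [ev, Finset.mem_filter, Finset.mem_univ, true_and, Finset.mem_sdiff,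
      Finset.mem_singleton] at hπ ⊢
    intro y hy
    simp only [Equiv.trans_apply, Equiv.swap_apply_left]
    rcases eq_or_ne y x with rfl | hyx
    · rw [Equiv.swap_apply_right]
      exact hπ v ⟨hv, (Ne.symm hy.2)⟩
    · rw [Equiv.swap_apply_of_ne_of_ne hy.2 hyx]
      exact hπ y ⟨hy.1, hyx⟩
  · intro π hπ
    simp only [ev, Finset.mem_filter, Finset.mem_univ, true_and, Finset.mem_sdiff,
      Finset.mem_singleton] at hπ ⊢
    intro y hy
    simp only [Equiv.trans_apply, Equiv.swap_apply_right]
    rcases eq_or_ne y v with rfl | hyv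
    · rw [Equiv.swap_apply_left]
      exact hπ x ⟨hx, (Ne.symm hy.2)⟩
    · rw [Equiv.swap_apply_of_ne_of_ne hyv hy.2]
      exact hπ y ⟨hy.1, hyv⟩
  · intro π _
    ext y
    simp [Equiv.swap_apply_self]
  · intro π _
    ext y
    simp [Equiv.swap_apply_self]

private lemma total_eq (T : Finset V) (v : V) (hv : v ∈ T) :
    Fintype.card (V ≃ Fin (Fintype.card V)) = T.card * (ev T v).card := by
  have hpart : (Finset.univ : Finset (V ≃ Fin (Fintype.card V))) = T.biUnion (ev T) := by
    ext π
    simp only [Finset.mem_univ, Finset.mem_biUnion, true_iff]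
    obtain ⟨x, hxT, hxmin⟩ := T.exists_min_image (fun y => π y) ⟨v, hv⟩
    refine ⟨x, hxT, ?_⟩
    simp only [ev, Finset.mem_filter, Finset.mem_univ, true_and, Finset.mem_sdiff,
      Finset.mem_singleton]
    intro y hy
    exact lt_of_le_of_ne (hxmin y hy.1) (fun e => hy.2 (π.injective e.symm))
  have hdisj : ∀ x ∈ T, ∀ y ∈ T, x ≠ y → Disjoint (ev T x) (ev T y) := by
    intro x hxT y hyT hxy
    rw [Finset.disjoint_left]
    intro π hπx hπy
    simp only [ev, Finset.mem_filter, Finset.mem_univ, true_and, Finset.mem_sdiff,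
      Finset.mem_singleton] at hπx hπy
    exact absurd (hπx y ⟨hyT, (Ne.symm hxy)⟩) (not_lt_of_gt (hπy x ⟨hxT, hxy⟩))
  calc Fintype.card (V ≃ Fin (Fintype.card V))
      = (Finset.univ : Finset (V ≃ Fin (Fintype.card V))).card := (Finset.card_univ).symm
    _ = ∑ x ∈ T, (ev T x).card := by rw [hpart, Finset.card_biUnion hdisj]
    _ = ∑ _x ∈ T, (ev T v).card := Finset.sum_congr rfl (fun x hx => ev_card_eq T v x hv hx)
    _ = T.card * (ev T v).card := by rw [Finset.sum_const, smul_eq_mul]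

end Aux

/-- For an edge `vu` and a uniformly random bijective labeling of the vertices,
the probability that `v`'s label is smaller than that of every vertex of
`(N(v) ∪ N(u)) \ {v}` is at least `1/(d(v)+d(u))`. -/
theorem stmt8 {V : Type*} [Fintype V] [DecidableEq V] (G : SimpleGraph V)
    [DecidableRel G.Adj] (v u : V) (h : G.Adj v u) :
    (1 : ℝ) / (G.degree v + G.degree u) ≤
      ((Finset.univ.filter (fun π : V ≃ Fin (Fintype.card V) =>
          ∀ x ∈ (G.neighborFinset v ∪ G.neighborFinset u) \ {v}, π v < π x)).card : ℝ)
        / (Fintype.card (V ≃ Fin (Fintype.card V)) : ℝ) := by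
  set T : Finset V := G.neighborFinset v ∪ G.neighborFinset u with hT
  have hv : v ∈ T := Finset.mem_union_right _ (by simpa using h.symm)
  have hE : (Finset.univ.filter (fun π : V ≃ Fin (Fintype.card V) =>
      ∀ x ∈ (G.neighborFinset v ∪ G.neighborFinset u) \ {v}, π v < π x)) = ev T v := rfl
  rw [hE]
  have htot := total_eq T v hv
  have hTcard : T.card ≤ G.degree v + G.degree u := by
    calc T.card ≤ (G.neighborFinset v).card + (G.neighborFinset u).card :=
          Finset.card_union_le _ _
      _ = G.degree v + G.degree u := by rw [G.card_neighborFinset_eq_degree,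
          G.card_neighborFinset_eq_degree]
  have hN : (0 : ℕ) < Fintype.card (V ≃ Fin (Fintype.card V)) :=
    Fintype.card_pos_iff.mpr ⟨Fintype.equivFin V⟩
  have hEpos : 0 < (ev T v).card := by
    rcases Nat.eq_zero_or_pos (ev T v).card with h0 | h0
    · rw [h0, Nat.mul_zero] at htot; omega
    · exact h0
  have hTpos : 0 < T.card := Finset.card_pos.mpr ⟨v, hv⟩
  have hdeg : (0 : ℝ) < G.degree v + G.degree u := by
    exact_mod_cast hTpos.trans_le hTcard
  rw [div_le_div_iff₀ hdeg (by exact_mod_cast hN)]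
  rw [htot]
  push_cast
  have hc : (T.card : ℝ) ≤ (G.degree v : ℝ) + G.degree u := by exact_mod_cast hTcard
  nlinarith [hc, (Nat.cast_pos.mpr hEpos : (0:ℝ) < (ev T v).card)]
end

section
/- (Termination of iterative greedy MIS) Let G = (V,E) be a finite simple graph with injective identifiers. Define the iterative process: at each step, let I_step = { v ∈ V' : ∀ w ∈ N(v) ∩ V', id(v) < id(w) }, add I_step to I, and remove I_step together with all its neighbors from V'. Then the process terminates after finitely many steps with V' = ∅, and the final set I is a maximal independent set of G. -/
variable {V : Type*} [Fintype V] [DecidableEq V]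

/-- The local-id-minima of the induced subgraph on `W`. -/
def mins (G : SimpleGraph V) [DecidableRel G.Adj] (id_ : V → ℕ)
    (W : Finset V) : Finset V :=
  W.filter fun v => ∀ w ∈ W, G.Adj v w → id_ v < id_ w

/-- One step of the greedy process: remove the local minima together with
their neighbors in `W`. -/
def stepF (G : SimpleGraph V) [DecidableRel G.Adj] (id_ : V → ℕ)
    (W : Finset V) : Finset V :=
  W \ (mins G id_ W ∪ W.filter fun w => ∃ v ∈ mins G id_ W, G.Adj v w)

/-- Remaining vertices after `k` steps, starting from all vertices. -/
def Vrem (G : SimpleGraph V) [DecidableRel G.Adj] (id_ : V → ℕ) (k : ℕ) :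
    Finset V :=
  (stepF G id_)^[k] Finset.univ

/-- Vertices accumulated into `I` during the first `n` steps. -/
def Iacc (G : SimpleGraph V) [DecidableRel G.Adj] (id_ : V → ℕ) (n : ℕ) :
    Finset V :=
  (Finset.range n).biUnion fun k => mins G id_ (Vrem G id_ k)

section Aux

variable (G : SimpleGraph V) [DecidableRel G.Adj] (id_ : V → ℕ)

lemma myStepF_subset (W : Finset V) : stepF G id_ W ⊆ W := Finset.sdiff_subset

lemma myVrem_succ (k : ℕ) : Vrem G id_ (k + 1) = stepF G id_ (Vrem G id_ k) := by
  simp [Vrem, Function.iterate_succ_apply']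

lemma myVrem_anti {j k : ℕ} (h : j ≤ k) : Vrem G id_ k ⊆ Vrem G id_ j := by
  induction k with
  | zero => simp_all
  | succ k ih =>
    rcases Nat.lt_or_ge j (k + 1) with h' | h'
    · exact (myVrem_succ G id_ k ▸ myStepF_subset G id_ _).trans (ih (Nat.lt_succ_iff.mp h'))
    · have : j = k + 1 := le_antisymm h h'
      simp [this]

lemma myStep_ssubset (hinj : Function.Injective id_) {W : Finset V} (hW : W.Nonempty) :
    stepF G id_ W ⊂ W := by
  obtain ⟨v, hv, hmin⟩ := W.exists_min_image id_ hW
  refine (Finset.ssubset_iff_of_subset (myStepF_subset G id_ W)).mpr ⟨v, hv, ?_⟩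
  intro hvs
  have hvm : v ∈ mins G id_ W := by
    refine Finset.mem_filter.mpr ⟨hv, fun w hw hadj => ?_⟩
    exact lt_of_le_of_ne (hmin w hw) fun h => hadj.ne (hinj h)
  exact (Finset.mem_sdiff.mp hvs).2 (Finset.mem_union_left _ hvm)

lemma myStepF_empty : stepF G id_ ∅ = ∅ := by
  simp [stepF]

lemma myVrem_card (hinj : Function.Injective id_) :
    ∀ k, Vrem G id_ k = ∅ ∨ (Vrem G id_ k).card + k ≤ Fintype.card V := by
  intro k
  induction k with
  | zero => right; simp [Vrem, Finset.card_univ]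
  | succ k ih =>
    by_cases hk : Vrem G id_ k = ∅
    · left; rw [myVrem_succ, hk, myStepF_empty]
    · rcases ih with h | h
      · exact absurd h hk
      · right
        have hss := myStep_ssubset G id_ hinj (Finset.nonempty_iff_ne_empty.mpr hk)
        have := Finset.card_lt_card hss
        rw [myVrem_succ]
        omega

lemma myNot_adj_of_lt {v w : V} {k j : ℕ} (hkj : k < j)
    (hv : v ∈ mins G id_ (Vrem G id_ k)) (hw : w ∈ Vrem G id_ j) : ¬ G.Adj v w := by
  intro hadj
  have hwk1 : w ∈ Vrem G id_ (k + 1) := myVrem_anti G id_ hkj hw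
  rw [myVrem_succ] at hwk1
  have hwK : w ∈ Vrem G id_ k := myStepF_subset G id_ _ hwk1
  exact (Finset.mem_sdiff.mp hwk1).2
    (Finset.mem_union_right _ (Finset.mem_filter.mpr ⟨hwK, v, hv, hadj⟩))

end Aux

/-- Termination of iterative greedy MIS: the process empties `V'` after
finitely many steps, and the accumulated set `I` is a maximal independent set. -/
theorem stmt17 (G : SimpleGraph V) [DecidableRel G.Adj] (id_ : V → ℕ)
    (hinj : Function.Injective id_) :
    ∃ N : ℕ, Vrem G id_ N = ∅ ∧
      (∀ v ∈ Iacc G id_ N, ∀ w ∈ Iacc G id_ N, ¬ G.Adj v w) ∧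
      (∀ v : V, v ∉ Iacc G id_ N → ∃ w ∈ Iacc G id_ N, G.Adj v w) := by
  set N := Fintype.card V with hNdef
  have hN : Vrem G id_ N = ∅ := by
    rcases myVrem_card G id_ hinj N with h | h
    · exact h
    · have : (Vrem G id_ N).card = 0 := by omega
      exact Finset.card_eq_zero.mp this
  have hmem : ∀ v, v ∈ Iacc G id_ N ↔ ∃ k < N, v ∈ mins G id_ (Vrem G id_ k) := by
    intro v
    simp [Iacc, Finset.mem_biUnion]
  refine ⟨N, hN, ?_, ?_⟩
  · intro v hv w hw hadj
    obtain ⟨k, hk, hvk⟩ := (hmem v).mp hv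
    obtain ⟨j, hj, hwj⟩ := (hmem w).mp hw
    rcases lt_trichotomy k j with h | h | h
    · exact myNot_adj_of_lt G id_ h hvk
        (Finset.filter_subset _ _ hwj) hadj
    · subst h
      have h1 := (Finset.mem_filter.mp hvk).2 w (Finset.filter_subset _ _ hwj) hadj
      have h2 := (Finset.mem_filter.mp hwj).2 v (Finset.filter_subset _ _ hvk) hadj.symm
      omega
    · exact myNot_adj_of_lt G id_ h hwj
        (Finset.filter_subset _ _ hvk) hadj.symm
  · intro v hv
    have hex : ∃ m, v ∉ Vrem G id_ m := ⟨N, by simp [hN]⟩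
    have hvm : v ∉ Vrem G id_ (Nat.find hex) := Nat.find_spec hex
    have hm0 : Nat.find hex ≠ 0 := by
      intro h
      apply hvm
      rw [h]
      simp [Vrem]
    obtain ⟨k, hmk⟩ := Nat.exists_eq_succ_of_ne_zero hm0
    rw [hmk] at hvm
    have hvk : v ∈ Vrem G id_ k := by
      by_contra h
      exact absurd (Nat.find_min hex (hmk ▸ Nat.lt_succ_self k)) (by simpa using h)
    have hkN : k < N := by
      by_contra h
      have : v ∈ Vrem G id_ N := myVrem_anti G id_ (not_lt.mp h) hvk
      rw [hN] at this
      exact absurd this (Finset.notMem_empty v)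
    rw [myVrem_succ, stepF, Finset.mem_sdiff] at hvm
    push_neg at hvm
    have hmem2 := hvm hvk
    rcases Finset.mem_union.mp hmem2 with h | h
    · exact absurd ((hmem v).mpr ⟨k, hkN, h⟩) hv
    · obtain ⟨_, u, hu, hadj⟩ := Finset.mem_filter.mp h
      exact ⟨u, (hmem u).mpr ⟨k, hkN, hu⟩, hadj.symm⟩
end
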